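/- arXiv:2110.11463 — 3 statements merged into one kernel-verified Lean document; each statement's English description precedes it below -/
import Mathlib

section
/- For X ≥ 1 define the partial zeta function ζ_X(s) := ∫_{[1,X]} x^{−s} dN(x) (a Lebesgue–Stieltjes integral, an entire function of s). Then for every s = σ+it with σ > θ one has |ζ_X(s)| ≤ ζ_X(σ), and moreover: if θ < σ < 1 then ζ_X(σ) ≤ min( κ·X^{1−σ}/(1−σ) + A/(σ−θ), κ·X^{1−σ}·log X + A/(σ−θ) ); if σ = 1 then ζ_X(1) ≤ κ·log X + A/(1−θ); and if σ > 1 then ζ_X(σ) ≤ min( σ(A+κ)/(σ−1), κ·log X + σA/(σ−θ) ). -/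
open MeasureTheory Set
open Function

lemma master (θ κ A σ X : ℝ) (hθ0 : 0 < θ) (hκ : 0 < κ) (hA : 0 < A)
    (N : StieltjesFunction ℝ) (hN0 : ∀ x : ℝ, x < 1 → N x = 0)
    (hAx : ∀ x : ℝ, 1 ≤ x → |N x - κ * (x - 1)| ≤ A * x ^ θ)
    (hX : 1 ≤ X) (hσ : θ < σ) :
    ∫ x in Icc (1:ℝ) X, x ^ (-σ) ∂N.measure ≤
      X ^ (-σ) * (κ * (X - 1) + A * X ^ θ)
        + ∫ t in (1:ℝ)..X, σ * t ^ (-σ - 1) * (κ * (t - 1) + A * t ^ θ) := by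
  have hσ0 : 0 < σ := hθ0.trans hσ
  have hX0 : (0:ℝ) < X := lt_of_lt_of_le one_pos hX
  -- continuity helper
  have hcont : ∀ (p a b : ℝ), 0 < a → ContinuousOn (fun t : ℝ => t ^ p) (Icc a b) := by
    intro p a b ha
    exact continuousOn_id.rpow_const fun x hx => Or.inl (ne_of_gt (lt_of_lt_of_le ha hx.1))
  -- leftLim at 1 is 0
  have hll1 : Function.leftLim N 1 = 0 := by
    apply leftLim_eq_of_tendsto
    exact Filter.Tendsto.congr'
      (by filter_upwards [self_mem_nhdsWithin] with x hx using (hN0 x hx).symm)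
      tendsto_const_nhds
  -- bound on N
  have hNb : ∀ t : ℝ, 1 ≤ t → N t ≤ κ * (t - 1) + A * t ^ θ := by
    intro t ht
    have := (abs_le.1 (hAx t ht)).2
    linarith
  have hNnn : ∀ t : ℝ, 0 ≤ N t := by
    intro t
    rcases lt_or_ge t 1 with h | h
    · exact le_of_eq (hN0 t h).symm
    · exact le_trans (le_of_eq (hN0 0 one_pos).symm) (N.mono (by linarith))
  -- FTC
  have hFTC : ∀ x ∈ Icc (1:ℝ) X, ∫ t in x..X, σ * t ^ (-σ - 1) = x ^ (-σ) - X ^ (-σ) := by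
    rintro x ⟨hx1, hxX⟩
    have h0x : (0:ℝ) < x := lt_of_lt_of_le one_pos hx1
    rw [intervalIntegral.integral_const_mul,
      integral_rpow (Or.inr ⟨by intro hc; exact hσ0.ne' (by linarith),
        notMem_uIcc_of_lt h0x hX0⟩)]
    have he : -σ - 1 + 1 = -σ := by ring
    rw [he, div_neg, mul_neg, neg_eq_iff_eq_neg]
    rw [mul_div_cancel₀ _ hσ0.ne']
    ring
  -- decomposition of x^{-σ}
  have hdecomp : ∀ x ∈ Icc (1:ℝ) X, ENNReal.ofReal (x ^ (-σ)) =
      ENNReal.ofReal (X ^ (-σ)) + ∫⁻ t in Ioc x X, ENNReal.ofReal (σ * t ^ (-σ - 1)) := by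
    rintro x ⟨hx1, hxX⟩
    have h0x : (0:ℝ) < x := lt_of_lt_of_le one_pos hx1
    have hint : IntegrableOn (fun t => σ * t ^ (-σ - 1)) (Ioc x X) volume := by
      refine ((continuousOn_const.mul (hcont _ x X h0x)).integrableOn_compact
        isCompact_Icc).mono_set Ioc_subset_Icc_self
    have hnn : 0 ≤ᵐ[volume.restrict (Ioc x X)] fun t => σ * t ^ (-σ - 1) := by
      filter_upwards [ae_restrict_mem measurableSet_Ioc] with t ht
      exact mul_nonneg hσ0.le (Real.rpow_nonneg (le_of_lt (h0x.trans ht.1)) _)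
    rw [← ofReal_integral_eq_lintegral_ofReal hint hnn]
    have hle : X ^ (-σ) ≤ x ^ (-σ) :=
      Real.rpow_le_rpow_of_nonpos h0x hxX (by linarith)
    rw [show (∫ t in Ioc x X, σ * t ^ (-σ - 1)) = ∫ t in x..X, σ * t ^ (-σ - 1) from
      (intervalIntegral.integral_of_le hxX).symm, hFTC x ⟨hx1, hxX⟩,
      ← ENNReal.ofReal_add (Real.rpow_nonneg hX0.le _) (by linarith)]
    norm_num
  set μ := N.measure with hμ
  set g : ℝ → ENNReal := fun t => ENNReal.ofReal (σ * t ^ (-σ - 1)) with hg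
  set ψ : ℝ → ℝ := fun t => σ * t ^ (-σ - 1) * (κ * (t - 1) + A * t ^ θ) with hψ
  have hgmeas : Measurable g := by
    apply ENNReal.measurable_ofReal.comp
    have : Measurable fun t : ℝ => t ^ (-σ - 1) := by measurability
    exact this.const_mul σ
  have hψcont : ContinuousOn ψ (Icc (1:ℝ) X) := by
    refine (continuousOn_const.mul (hcont (-σ - 1) 1 X one_pos)).mul ?_
    exact ((continuous_const.mul (continuous_id.sub continuous_const)).continuousOn).add
      (continuousOn_const.mul (hcont θ 1 X one_pos))
  have hψnn : ∀ t ∈ Icc (1:ℝ) X, 0 ≤ ψ t := by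
    rintro t ⟨ht1, htX⟩
    have h0t : (0:ℝ) < t := lt_of_lt_of_le one_pos ht1
    have h1 := Real.rpow_nonneg h0t.le θ
    have h2 := Real.rpow_nonneg h0t.le (-σ - 1)
    have h3 : (0:ℝ) ≤ κ * (t - 1) + A * t ^ θ := by nlinarith
    have : ψ t = σ * t ^ (-σ - 1) * (κ * (t - 1) + A * t ^ θ) := rfl
    rw [this]
    positivity
  -- the indicator kernel
  set F : ℝ → ℝ → ENNReal := fun x t => (Ioi x).indicator g t with hF
  have hInd : ∀ x ∈ Icc (1:ℝ) X, ∫⁻ t in Ioc x X, g t ∂volume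
      = ∫⁻ t in Ioc (1:ℝ) X, F x t ∂volume := by
    rintro x ⟨hx1, hxX⟩
    have hset : Ioi x ∩ Ioc 1 X = Ioc x X := by
      ext t
      simp only [mem_inter_iff, mem_Ioi, mem_Ioc]
      constructor
      · rintro ⟨h1, _, h3⟩; exact ⟨h1, h3⟩
      · rintro ⟨h1, h2⟩; exact ⟨h1, lt_of_le_of_lt hx1 h1, h2⟩
    rw [hF]
    simp only
    rw [lintegral_indicator measurableSet_Ioi, Measure.restrict_restrict measurableSet_Ioi, hset]
  have hmeasF : AEMeasurable (Function.uncurry F)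
      ((μ.restrict (Icc 1 X)).prod (volume.restrict (Ioc 1 X))) := by
    have hEq : Function.uncurry F = Set.indicator {p : ℝ × ℝ | p.1 < p.2} (fun p => g p.2) := by
      ext p
      by_cases h : p.1 < p.2 <;>
        simp [Function.uncurry, hF, Set.indicator, mem_Ioi, h]
    rw [hEq]
    exact ((hgmeas.comp measurable_snd).indicator
      (measurableSet_lt measurable_fst measurable_snd)).aemeasurable
  have hInner : ∀ t ∈ Ioc (1:ℝ) X, ∫⁻ x in Icc (1:ℝ) X, F x t ∂μ
      = g t * ENNReal.ofReal (Function.leftLim N t) := by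
    intro t ht
    have h1 : ∀ x, F x t = (Iio t).indicator (fun _ => g t) x := by
      intro x
      by_cases h : x < t <;> simp [hF, Set.indicator, mem_Ioi, mem_Iio, h]
    have hset : Iio t ∩ Icc 1 X = Ico 1 t := by
      ext x
      simp only [mem_inter_iff, mem_Iio, mem_Icc, mem_Ico]
      constructor
      · rintro ⟨h1', h2', _⟩; exact ⟨h2', h1'⟩
      · rintro ⟨h1', h2'⟩; exact ⟨h2', h1', le_trans h2'.le ht.2⟩
    calc ∫⁻ x in Icc (1:ℝ) X, F x t ∂μ
        = ∫⁻ x in Icc (1:ℝ) X, (Iio t).indicator (fun _ => g t) x ∂μ := by simp_rw [h1]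
      _ = ∫⁻ x in Iio t ∩ Icc 1 X, g t ∂μ := by
          rw [lintegral_indicator measurableSet_Iio, Measure.restrict_restrict measurableSet_Iio]
      _ = g t * μ (Iio t ∩ Icc 1 X) := setLIntegral_const _ _
      _ = g t * ENNReal.ofReal (Function.leftLim N t) := by
          rw [hset, hμ, StieltjesFunction.measure_Ico, hll1, sub_zero]
  -- the main lintegral computation
  have hL : ∫⁻ x in Icc (1:ℝ) X, ENNReal.ofReal (x ^ (-σ)) ∂μ
      = ENNReal.ofReal (X ^ (-σ)) * μ (Icc 1 X)
        + ∫⁻ t in Ioc (1:ℝ) X, g t * ENNReal.ofReal (Function.leftLim N t) ∂volume := by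
    calc ∫⁻ x in Icc (1:ℝ) X, ENNReal.ofReal (x ^ (-σ)) ∂μ
        = ∫⁻ x in Icc (1:ℝ) X,
            (ENNReal.ofReal (X ^ (-σ)) + ∫⁻ t in Ioc x X, g t ∂volume) ∂μ :=
          setLIntegral_congr_fun measurableSet_Icc hdecomp
      _ = ENNReal.ofReal (X ^ (-σ)) * μ (Icc 1 X)
            + ∫⁻ x in Icc (1:ℝ) X, ∫⁻ t in Ioc x X, g t ∂volume ∂μ := by
          rw [lintegral_add_left measurable_const, setLIntegral_const]
      _ = ENNReal.ofReal (X ^ (-σ)) * μ (Icc 1 X)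
            + ∫⁻ x in Icc (1:ℝ) X, ∫⁻ t in Ioc (1:ℝ) X, F x t ∂volume ∂μ := by
          rw [setLIntegral_congr_fun measurableSet_Icc hInd]
      _ = ENNReal.ofReal (X ^ (-σ)) * μ (Icc 1 X)
            + ∫⁻ t in Ioc (1:ℝ) X, ∫⁻ x in Icc (1:ℝ) X, F x t ∂μ ∂volume := by
          rw [lintegral_lintegral_swap hmeasF]
      _ = ENNReal.ofReal (X ^ (-σ)) * μ (Icc 1 X)
            + ∫⁻ t in Ioc (1:ℝ) X, g t * ENNReal.ofReal (Function.leftLim N t) ∂volume := by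
          rw [setLIntegral_congr_fun measurableSet_Ioc hInner]
  -- bound the lintegral by ψ
  have hbound : ∫⁻ t in Ioc (1:ℝ) X, g t * ENNReal.ofReal (Function.leftLim N t) ∂volume
      ≤ ∫⁻ t in Ioc (1:ℝ) X, ENNReal.ofReal (ψ t) ∂volume := by
    refine lintegral_mono_ae ?_
    filter_upwards [ae_restrict_mem measurableSet_Ioc] with t ht
    have ht1 : (1:ℝ) ≤ t := ht.1.le
    have hNt : Function.leftLim N t ≤ κ * (t - 1) + A * t ^ θ :=
      le_trans (N.mono.leftLim_le le_rfl) (hNb t ht1)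
    calc g t * ENNReal.ofReal (Function.leftLim N t)
        ≤ g t * ENNReal.ofReal (κ * (t - 1) + A * t ^ θ) :=
          mul_le_mul_right (ENNReal.ofReal_le_ofReal hNt) _
      _ = ENNReal.ofReal (ψ t) := by
          rw [hg, hψ]
          simp only
          rw [← ENNReal.ofReal_mul (mul_nonneg hσ0.le (Real.rpow_nonneg (by linarith) _))]
  have hψint : IntegrableOn ψ (Ioc (1:ℝ) X) volume :=
    (hψcont.integrableOn_compact isCompact_Icc).mono_set Ioc_subset_Icc_self
  have hback : ∫⁻ t in Ioc (1:ℝ) X, ENNReal.ofReal (ψ t) ∂volume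
      = ENNReal.ofReal (∫ t in (1:ℝ)..X, ψ t) := by
    rw [intervalIntegral.integral_of_le hX,
      ofReal_integral_eq_lintegral_ofReal hψint ?_]
    filter_upwards [ae_restrict_mem measurableSet_Ioc] with t ht
    exact hψnn t ⟨ht.1.le, ht.2⟩
  -- put everything together
  have hμIcc : μ (Icc 1 X) = ENNReal.ofReal (N X) := by
    rw [hμ, StieltjesFunction.measure_Icc, hll1, sub_zero]
  have hRHSnn1 : (0:ℝ) ≤ κ * (X - 1) + A * X ^ θ := by
    have := Real.rpow_nonneg hX0.le θ
    nlinarith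
  have hIntnn : (0:ℝ) ≤ ∫ t in (1:ℝ)..X, ψ t :=
    intervalIntegral.integral_nonneg hX hψnn
  have hfinal : ∫⁻ x in Icc (1:ℝ) X, ENNReal.ofReal (x ^ (-σ)) ∂μ
      ≤ ENNReal.ofReal (X ^ (-σ) * (κ * (X - 1) + A * X ^ θ)
          + ∫ t in (1:ℝ)..X, ψ t) := by
    rw [hL, ENNReal.ofReal_add (by positivity) hIntnn,
      ENNReal.ofReal_mul (Real.rpow_nonneg hX0.le _)]
    refine add_le_add ?_ (le_of_le_of_eq hbound hback)
    rw [hμIcc]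
    exact mul_le_mul_right (ENNReal.ofReal_le_ofReal (hNb X hX)) _
  -- convert the Bochner integral to a lower integral
  have hmain : ∫ x in Icc (1:ℝ) X, x ^ (-σ) ∂μ
      = (∫⁻ x in Icc (1:ℝ) X, ENNReal.ofReal (x ^ (-σ)) ∂μ).toReal := by
    refine integral_eq_lintegral_of_nonneg_ae ?_ ?_
    · filter_upwards [ae_restrict_mem measurableSet_Icc] with x hx
      exact Real.rpow_nonneg (by linarith [hx.1]) _
    · exact ((hcont (-σ) 1 X one_pos).aestronglyMeasurable measurableSet_Icc)
  rw [hmain]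
  exact ENNReal.toReal_le_of_le_ofReal (by positivity) hfinal

lemma psi_eval (θ κ A σ X : ℝ) (hθ0 : 0 < θ) (hX : 1 ≤ X) (hσ : θ < σ) :
    ∫ t in (1:ℝ)..X, σ * t ^ (-σ - 1) * (κ * (t - 1) + A * t ^ θ)
      = κ * σ * (∫ t in (1:ℝ)..X, t ^ (-σ)) - κ * σ * ((1 - X ^ (-σ)) / σ)
        + A * σ * ((X ^ (θ - σ) - 1) / (θ - σ)) := by
  have hσ0 : 0 < σ := hθ0.trans hσ
  have hX0 : (0:ℝ) < X := lt_of_lt_of_le one_pos hX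
  have h0 : (0:ℝ) ∉ uIcc (1:ℝ) X := notMem_uIcc_of_lt one_pos hX0
  have hcont : ∀ p : ℝ, ContinuousOn (fun t : ℝ => t ^ p) (uIcc (1:ℝ) X) := by
    intro p
    refine continuousOn_id.rpow_const fun x hx => Or.inl (ne_of_gt ?_)
    rw [uIcc_of_le hX] at hx
    exact lt_of_lt_of_le one_pos hx.1
  have hi : ∀ p : ℝ, IntervalIntegrable (fun t : ℝ => t ^ p) volume 1 X := fun p =>
    (hcont p).intervalIntegrable
  have hcongr : ∫ t in (1:ℝ)..X, σ * t ^ (-σ - 1) * (κ * (t - 1) + A * t ^ θ)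
      = ∫ t in (1:ℝ)..X, (κ * σ * t ^ (-σ) - κ * σ * t ^ (-σ - 1) + A * σ * t ^ (θ - σ - 1)) := by
    refine intervalIntegral.integral_congr fun t ht => ?_
    rw [uIcc_of_le hX] at ht
    have h0t : (0:ℝ) < t := lt_of_lt_of_le one_pos ht.1
    have e1 : t ^ (-σ - 1) * t = t ^ (-σ) := by
      have h := Real.rpow_add_one (ne_of_gt h0t) (-σ - 1)
      rw [show -σ - 1 + 1 = -σ by ring] at h
      exact h.symm
    have e2 : t ^ (-σ - 1) * t ^ θ = t ^ (θ - σ - 1) := by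
      have h := Real.rpow_add h0t (-σ - 1) θ
      rw [show -σ - 1 + θ = θ - σ - 1 by ring] at h
      exact h.symm
    linear_combination (σ * κ) * e1 + (A * σ) * e2
  rw [hcongr, intervalIntegral.integral_add (((hi _).const_mul _).sub ((hi _).const_mul _))
      ((hi _).const_mul _),
    intervalIntegral.integral_sub ((hi _).const_mul _) ((hi _).const_mul _),
    intervalIntegral.integral_const_mul, intervalIntegral.integral_const_mul,
    intervalIntegral.integral_const_mul]
  have e3 : ∫ t in (1:ℝ)..X, t ^ (-σ - 1) = (1 - X ^ (-σ)) / σ := by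
    rw [integral_rpow (Or.inr ⟨by intro hc; exact hσ0.ne' (by linarith), h0⟩)]
    rw [show -σ - 1 + 1 = -σ by ring, Real.one_rpow]
    rw [div_neg]
    ring
  have e4 : ∫ t in (1:ℝ)..X, t ^ (θ - σ - 1) = (X ^ (θ - σ) - 1) / (θ - σ) := by
    rw [integral_rpow (Or.inr ⟨by intro hc; exact (sub_ne_zero.2 (ne_of_lt hσ)) (by linarith), h0⟩)]
    rw [show θ - σ - 1 + 1 = θ - σ by ring, Real.one_rpow]
  rw [e3, e4]

lemma Ieval_ne (σ X : ℝ) (hX : 1 ≤ X) (hσ1 : σ ≠ 1) :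
    ∫ t in (1:ℝ)..X, t ^ (-σ) = (X ^ (1 - σ) - 1) / (1 - σ) := by
  have hX0 : (0:ℝ) < X := lt_of_lt_of_le one_pos hX
  rw [integral_rpow (Or.inr ⟨by intro hc; exact hσ1 (by linarith),
    notMem_uIcc_of_lt one_pos hX0⟩)]
  rw [show -σ + 1 = 1 - σ by ring, Real.one_rpow]

lemma Ieval_one (X : ℝ) (hX : 1 ≤ X) :
    ∫ t in (1:ℝ)..X, t ^ (-(1:ℝ)) = Real.log X := by
  have hX0 : (0:ℝ) < X := lt_of_lt_of_le one_pos hX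
  simp_rw [Real.rpow_neg_one]
  rw [integral_inv (notMem_uIcc_of_lt one_pos hX0), div_one]

lemma master2 (θ κ A σ X : ℝ) (hθ0 : 0 < θ) (hκ : 0 < κ) (hA : 0 < A)
    (N : StieltjesFunction ℝ) (hN0 : ∀ x : ℝ, x < 1 → N x = 0)
    (hAx : ∀ x : ℝ, 1 ≤ x → |N x - κ * (x - 1)| ≤ A * x ^ θ)
    (hX : 1 ≤ X) (hσ : θ < σ) :
    ∫ x in Icc (1:ℝ) X, x ^ (-σ) ∂N.measure ≤
      κ * (X ^ (1 - σ) - 1 + σ * ∫ t in (1:ℝ)..X, t ^ (-σ)) + A * σ / (σ - θ) := by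
  have hσ0 : 0 < σ := hθ0.trans hσ
  have hX0 : (0:ℝ) < X := lt_of_lt_of_le one_pos hX
  have key := master θ κ A σ X hθ0 hκ hA N hN0 hAx hX hσ
  rw [psi_eval θ κ A σ X hθ0 hX hσ] at key
  refine le_trans key ?_
  have hv : X ^ (-σ) * X = X ^ (1 - σ) := by
    have h := Real.rpow_add_one (ne_of_gt hX0) (-σ)
    rw [show -σ + 1 = 1 - σ by ring] at h
    exact h.symm
  have hw : X ^ (-σ) * X ^ θ = X ^ (θ - σ) := by
    have h := Real.rpow_add hX0 (-σ) θ
    rw [show -σ + θ = θ - σ by ring] at h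
    exact h.symm
  have hw0 : (0:ℝ) ≤ X ^ (θ - σ) := Real.rpow_nonneg hX0.le _
  have hpos : (0:ℝ) < σ - θ := by linarith
  have hexp : X ^ (-σ) * (κ * (X - 1) + A * X ^ θ)
      = κ * X ^ (1 - σ) - κ * X ^ (-σ) + A * X ^ (θ - σ) := by
    rw [← hv, ← hw]; ring
  have hcan : κ * σ * ((1 - X ^ (-σ)) / σ) = κ * (1 - X ^ (-σ)) := by
    field_simp
  have hAterm : A * σ * ((X ^ (θ - σ) - 1) / (θ - σ)) + A * X ^ (θ - σ) ≤ A * σ / (σ - θ) := by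
    have heq : A * σ * ((X ^ (θ - σ) - 1) / (θ - σ)) + A * X ^ (θ - σ)
        = (A * σ - A * θ * X ^ (θ - σ)) / (σ - θ) := by
      have hne1 : θ - σ ≠ 0 := by linarith
      have hne2 : σ - θ ≠ 0 := ne_of_gt hpos
      field_simp
      ring
    rw [heq, div_le_div_iff₀ hpos hpos]
    nlinarith [mul_nonneg (mul_nonneg (mul_nonneg hA.le hθ0.le) hw0) hpos.le]
  linarith

lemma exp_aux (c L : ℝ) (hc : 0 ≤ c) (hL : 0 ≤ L) :
    Real.exp (L * c) - 1 ≤ c * L * Real.exp (L * c) := by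
  have h1 := Real.add_one_le_exp (-(L * c))
  have h2 : Real.exp (-(L * c)) * Real.exp (L * c) = 1 := by
    rw [← Real.exp_add]; simp
  nlinarith [Real.exp_pos (L * c)]

lemma caseA (θ κ A σ X : ℝ) (hθ0 : 0 < θ) (hκ : 0 < κ) (hA : 0 < A) (hX : 1 ≤ X)
    (hσθ : θ < σ) (hσ1 : σ < 1) :
    κ * (X ^ (1 - σ) - 1 + σ * ((X ^ (1 - σ) - 1) / (1 - σ))) + A * σ / (σ - θ)
      ≤ min (κ * X ^ (1 - σ) / (1 - σ) + A / (σ - θ))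
          (κ * X ^ (1 - σ) * Real.log X + A / (σ - θ)) := by
  have hX0 : (0:ℝ) < X := lt_of_lt_of_le one_pos hX
  have hσ0 : 0 < σ := hθ0.trans hσθ
  have hc : (0:ℝ) < 1 - σ := by linarith
  have hd : (0:ℝ) < σ - θ := by linarith
  set u := X ^ (1 - σ) with hu
  have hu1 : (1:ℝ) ≤ u := Real.one_le_rpow hX (by linarith)
  have hL : (0:ℝ) ≤ Real.log X := Real.log_nonneg hX
  have hcoeff : u - 1 + σ * ((u - 1) / (1 - σ)) = (u - 1) / (1 - σ) := by
    field_simp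
    ring
  have hAle : A * σ / (σ - θ) ≤ A / (σ - θ) :=
    (div_le_div_iff_of_pos_right hd).mpr (by nlinarith)
  rw [hcoeff]
  refine le_min ?_ ?_
  · have h1 : κ * ((u - 1) / (1 - σ)) ≤ κ * u / (1 - σ) := by
      rw [mul_div_assoc]
      exact mul_le_mul_of_nonneg_left ((div_le_div_iff_of_pos_right hc).mpr (by linarith)) hκ.le
    linarith
  · have hexp : u = Real.exp (Real.log X * (1 - σ)) := by
      rw [hu, Real.rpow_def_of_pos hX0]
    have h2 := exp_aux (1 - σ) (Real.log X) hc.le hL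
    rw [← hexp] at h2
    have h3 : (u - 1) / (1 - σ) ≤ u * Real.log X := by
      rw [div_le_iff₀ hc]
      nlinarith
    have h4 : κ * ((u - 1) / (1 - σ)) ≤ κ * u * Real.log X := by
      rw [mul_assoc]
      exact mul_le_mul_of_nonneg_left h3 hκ.le
    linarith

lemma caseC (θ κ A σ X : ℝ) (hθ0 : 0 < θ) (hθ1 : θ < 1) (hκ : 0 < κ) (hA : 0 < A) (hX : 1 ≤ X)
    (hσ1 : 1 < σ) :
    κ * (X ^ (1 - σ) - 1 + σ * ((X ^ (1 - σ) - 1) / (1 - σ))) + A * σ / (σ - θ)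
      ≤ min (σ * (A + κ) / (σ - 1)) (κ * Real.log X + σ * A / (σ - θ)) := by
  have hX0 : (0:ℝ) < X := lt_of_lt_of_le one_pos hX
  have hc : (0:ℝ) < σ - 1 := by linarith
  have hd : (0:ℝ) < σ - θ := by linarith
  set u := X ^ (1 - σ) with hu
  have hu0 : (0:ℝ) < u := Real.rpow_pos_of_pos hX0 _
  have hu1 : u ≤ 1 := Real.rpow_le_one_of_one_le_of_nonpos hX (by linarith)
  have hL : (0:ℝ) ≤ Real.log X := Real.log_nonneg hX
  have hcoeff : u - 1 + σ * ((u - 1) / (1 - σ)) = (1 - u) / (σ - 1) := by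
    have : (1:ℝ) - σ ≠ 0 := by linarith
    field_simp
    ring
  rw [hcoeff]
  refine le_min ?_ ?_
  · have i1 : κ * ((1 - u) / (σ - 1)) ≤ σ * κ / (σ - 1) := by
      rw [mul_div_assoc' κ _ _]
      exact (div_le_div_iff_of_pos_right hc).mpr (by nlinarith)
    have i2 : A * σ / (σ - θ) ≤ σ * A / (σ - 1) := by
      rw [div_le_div_iff₀ hd hc]
      nlinarith [mul_nonneg (mul_nonneg hA.le (by linarith : (0:ℝ) ≤ σ)) (by linarith : (0:ℝ) ≤ 1 - θ)]
    have i3 : σ * (A + κ) / (σ - 1) = σ * A / (σ - 1) + σ * κ / (σ - 1) := by ring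
    linarith
  · have hexp : u = Real.exp (-(Real.log X * (σ - 1))) := by
      rw [hu, Real.rpow_def_of_pos hX0]
      congr 1
      ring
    have h1 := Real.add_one_le_exp (-(Real.log X * (σ - 1)))
    rw [← hexp] at h1
    have h3 : (1 - u) / (σ - 1) ≤ Real.log X := by
      rw [div_le_iff₀ hc]
      nlinarith
    have h4 : κ * ((1 - u) / (σ - 1)) ≤ κ * Real.log X :=
      mul_le_mul_of_nonneg_left h3 hκ.le
    have h5 : A * σ / (σ - θ) = σ * A / (σ - θ) := by ring
    linarith

/-- Lemma 2.1 (partial zeta estimates) from "A Riemann-von Mangoldt-type formula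
for the distribution of Beurling primes". -/
theorem statement0
    (θ κ A : ℝ) (hθ0 : 0 < θ) (hθ1 : θ < 1) (hκ : 0 < κ) (hA : 0 < A)
    (N : StieltjesFunction ℝ) (hN0 : ∀ x : ℝ, x < 1 → N x = 0)
    (hAx : ∀ x : ℝ, 1 ≤ x → |N x - κ * (x - 1)| ≤ A * x ^ θ)
    (X : ℝ) (hX : 1 ≤ X)
    (zetaX : ℂ → ℂ)
    (hzetaX : ∀ s : ℂ, zetaX s = ∫ x in Icc (1:ℝ) X, (x : ℂ) ^ (-s) ∂N.measure)
    (zetaXR : ℝ → ℝ)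
    (hzetaXR : ∀ σ : ℝ, zetaXR σ = ∫ x in Icc (1:ℝ) X, x ^ (-σ) ∂N.measure)
    (s : ℂ) (hs : θ < s.re) :
    ‖zetaX s‖ ≤ zetaXR s.re ∧
    (s.re < 1 →
      zetaXR s.re ≤ min (κ * X ^ (1 - s.re) / (1 - s.re) + A / (s.re - θ))
        (κ * X ^ (1 - s.re) * Real.log X + A / (s.re - θ))) ∧
    (s.re = 1 → zetaXR 1 ≤ κ * Real.log X + A / (1 - θ)) ∧
    (1 < s.re →
      zetaXR s.re ≤ min (s.re * (A + κ) / (s.re - 1))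
        (κ * Real.log X + s.re * A / (s.re - θ))) := by
  refine ⟨?_, ?_, ?_, ?_⟩
  · rw [hzetaX s, hzetaXR s.re]
    refine le_trans (norm_integral_le_integral_norm _) (le_of_eq ?_)
    refine setIntegral_congr_fun measurableSet_Icc fun x hx => ?_
    have h0x : (0:ℝ) < x := lt_of_lt_of_le one_pos hx.1
    rw [Complex.norm_cpow_eq_rpow_re_of_pos h0x, Complex.neg_re]
  · intro h1
    rw [hzetaXR s.re]
    have m2 := master2 θ κ A s.re X hθ0 hκ hA N hN0 hAx hX hs
    rw [Ieval_ne s.re X hX (ne_of_lt h1)] at m2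
    exact le_trans m2 (caseA θ κ A s.re X hθ0 hκ hA hX hs h1)
  · intro h1
    rw [hzetaXR 1]
    have m2 := master2 θ κ A 1 X hθ0 hκ hA N hN0 hAx hX (by rw [← h1]; exact hs)
    rw [Ieval_one X hX] at m2
    refine le_trans m2 ?_
    have : X ^ ((1:ℝ) - 1) = 1 := by norm_num
    rw [this]
    have : κ * (1 - 1 + 1 * Real.log X) + A * 1 / (1 - θ) = κ * Real.log X + A / (1 - θ) := by
      ring
    rw [this]
  · intro h1
    rw [hzetaXR s.re]
    have m2 := master2 θ κ A s.re X hθ0 hκ hA N hN0 hAx hX hs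
    rw [Ieval_ne s.re X hX (ne_of_gt h1)] at m2
    exact le_trans m2 (caseC θ κ A s.re X hθ0 hθ1 hκ hA hX h1)
end

section
/- For every s = σ+it with θ < σ ≤ |t| one has |ζ(s)| ≤ √2 · (A+κ) · |t| / (σ−θ). -/
open MeasureTheory Set

/-- Estimate (2.10): |ζ(s)| ≤ √2 (A+κ)|t|/(σ−θ) for θ < σ ≤ |t|. -/
theorem statement3
    (θ κ A : ℝ) (hθ0 : 0 < θ) (hθ1 : θ < 1) (hκ : 0 < κ) (hA : 0 < A)
    (N : ℝ → ℝ) (hN_mono : Monotone N)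
    (hN_rc : ∀ x : ℝ, ContinuousWithinAt N (Set.Ici x) x)
    (hN0 : ∀ x : ℝ, x < 1 → N x = 0)
    (hAx : ∀ x : ℝ, 1 ≤ x → |N x - κ * (x - 1)| ≤ A * x ^ θ)
    (zeta : ℂ → ℂ)
    (hzeta : ∀ s : ℂ, θ < s.re → s ≠ 1 →
      zeta s = (κ : ℂ) / (s - 1) +
        s * ∫ x in Set.Ioi (1:ℝ), ((N x - κ * (x - 1) : ℝ) : ℂ) * (x : ℂ) ^ (-s - 1))
    (s : ℂ) (hs : θ < s.re) (hst : s.re ≤ |s.im|) :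
    ‖zeta s‖ ≤ Real.sqrt 2 * ((A + κ) * |s.im|) / (s.re - θ) := by
  set σ := s.re with hσdef
  set t := s.im with htdef
  have hσ0 : 0 < σ := hθ0.trans hs
  have hT0 : 0 < |t| := hσ0.trans_le hst
  have hc : 0 < σ - θ := sub_pos.mpr hs
  have hs1 : s ≠ 1 := by
    intro h
    have h1 : σ = 1 := by rw [hσdef, h]; simp
    have h2 : t = 0 := by rw [htdef, h]; simp
    rw [h1, h2] at hst; norm_num at hst
  have hsq2 : Real.sqrt 2 ^ 2 = 2 := Real.sq_sqrt (by norm_num)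
  have hsq2pos : 0 < Real.sqrt 2 := Real.sqrt_pos.mpr (by norm_num)
  have htsq : σ ^ 2 ≤ t ^ 2 := by nlinarith [sq_abs t, hσ0.le, hst]
  -- bound on the integral
  have hexp : θ - σ - 1 < -1 := by linarith
  have hig : IntegrableOn (fun x : ℝ => A * x ^ (θ - σ - 1)) (Ioi 1) :=
    (integrableOn_Ioi_rpow_of_lt hexp one_pos).const_mul A
  have hpt : ∀ᵐ x ∂(volume.restrict (Ioi (1:ℝ))),
      ‖((N x - κ * (x - 1) : ℝ) : ℂ) * (x : ℂ) ^ (-s - 1)‖ ≤ A * x ^ (θ - σ - 1) := by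
    refine (ae_restrict_iff' measurableSet_Ioi).mpr (Filter.Eventually.of_forall fun x hx => ?_)
    have hx1 : (1:ℝ) < x := hx
    have hx0 : (0:ℝ) < x := lt_trans one_pos hx1
    rw [norm_mul, Complex.norm_real, Real.norm_eq_abs,
      Complex.norm_cpow_eq_rpow_re_of_pos hx0]
    have hre : (-s - 1).re = -σ - 1 := by simp [hσdef]
    rw [hre]
    have hsplit : x ^ (θ - σ - 1) = x ^ θ * x ^ (-σ - 1) := by
      rw [← Real.rpow_add hx0]; ring_nf
    rw [hsplit, ← mul_assoc]
    exact mul_le_mul_of_nonneg_right (hAx x hx1.le) (Real.rpow_nonneg hx0.le _)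
  have hIval : (∫ x in Ioi (1:ℝ), A * x ^ (θ - σ - 1)) = A / (σ - θ) := by
    rw [MeasureTheory.integral_const_mul, integral_Ioi_rpow_of_lt hexp one_pos,
      Real.one_rpow, show θ - σ - 1 + 1 = -(σ - θ) by ring, neg_div_neg_eq, mul_one_div]
  have hInt : ‖∫ x in Ioi (1:ℝ), ((N x - κ * (x - 1) : ℝ) : ℂ) * (x : ℂ) ^ (-s - 1)‖
      ≤ A / (σ - θ) :=
    le_of_le_of_eq (MeasureTheory.norm_integral_le_of_norm_le hig hpt) hIval
  -- bound ‖s‖ ≤ √2 |t|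
  have hnorms : ‖s‖ ≤ Real.sqrt 2 * |t| := by
    have h1 : ‖s‖ ^ 2 = σ ^ 2 + t ^ 2 := by
      rw [Complex.sq_norm, Complex.normSq_apply]; ring
    have h2 : ‖s‖ ^ 2 ≤ (Real.sqrt 2 * |t|) ^ 2 := by
      rw [h1, mul_pow, hsq2]; nlinarith [sq_abs t]
    have h3 := Real.sqrt_le_sqrt h2
    rwa [Real.sqrt_sq (norm_nonneg s), Real.sqrt_sq (by positivity)] at h3
  -- bound ‖s - 1‖ from below
  have hnorm1 : 1 ≤ Real.sqrt 2 * ‖s - 1‖ := by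
    have h1 : ‖s - 1‖ ^ 2 = (σ - 1) ^ 2 + t ^ 2 := by
      rw [Complex.sq_norm, Complex.normSq_apply, Complex.sub_re,
        Complex.sub_im, Complex.one_re, Complex.one_im]
      ring
    have h2 : (1:ℝ)/2 ≤ ‖s - 1‖ ^ 2 := by
      rw [h1]; nlinarith [sq_nonneg (σ - 1/2), htsq]
    nlinarith [sq_nonneg (Real.sqrt 2 * ‖s - 1‖ - 1), norm_nonneg (s - 1)]
  have hb0 : 0 < ‖s - 1‖ := norm_pos_iff.mpr (sub_ne_zero.mpr hs1)
  have hfirst : ‖(κ : ℂ) / (s - 1)‖ ≤ Real.sqrt 2 * κ := by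
    rw [norm_div, Complex.norm_real, Real.norm_eq_abs, abs_of_pos hκ, div_le_iff₀ hb0]
    nlinarith
  have hTc : σ - θ ≤ |t| := by linarith
  rw [hzeta s hs hs1]
  calc ‖(κ : ℂ) / (s - 1) +
        s * ∫ x in Ioi (1:ℝ), ((N x - κ * (x - 1) : ℝ) : ℂ) * (x : ℂ) ^ (-s - 1)‖
      ≤ ‖(κ : ℂ) / (s - 1)‖ +
        ‖s * ∫ x in Ioi (1:ℝ), ((N x - κ * (x - 1) : ℝ) : ℂ) * (x : ℂ) ^ (-s - 1)‖ :=
        norm_add_le _ _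
    _ ≤ Real.sqrt 2 * κ + (Real.sqrt 2 * |t|) * (A / (σ - θ)) := by
        rw [norm_mul]
        exact add_le_add hfirst
          (mul_le_mul hnorms hInt (norm_nonneg _) (by positivity))
    _ ≤ Real.sqrt 2 * κ * |t| / (σ - θ) + (Real.sqrt 2 * |t|) * (A / (σ - θ)) := by
        have : Real.sqrt 2 * κ ≤ Real.sqrt 2 * κ * |t| / (σ - θ) := by
          rw [le_div_iff₀ hc]
          have := mul_le_mul_of_nonneg_left hTc (by positivity : (0:ℝ) ≤ Real.sqrt 2 * κ)
          linarith
        linarith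
    _ = Real.sqrt 2 * ((A + κ) * |t|) / (σ - θ) := by
        field_simp
        ring
end

section
/- The Beurling zeta function has no zeros in the disc of radius κ(1−θ)/(A+κ) around 1: for every s ≠ 1 with |s − 1| ≤ κ(1−θ)/(A+κ) one has ζ(s) ≠ 0. (Every such s automatically satisfies Re s > θ, so ζ(s) is defined there.) -/
open MeasureTheory Set

/-- Estimate (2.12): ζ has no zero in the disc |s − 1| ≤ κ(1−θ)/(A+κ). -/
theorem statement4
    (θ κ A : ℝ) (hθ0 : 0 < θ) (hθ1 : θ < 1) (hκ : 0 < κ) (hA : 0 < A)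
    (N : ℝ → ℝ) (hN_mono : Monotone N)
    (hN_rc : ∀ x : ℝ, ContinuousWithinAt N (Set.Ici x) x)
    (hN0 : ∀ x : ℝ, x < 1 → N x = 0)
    (hAx : ∀ x : ℝ, 1 ≤ x → |N x - κ * (x - 1)| ≤ A * x ^ θ)
    (zeta : ℂ → ℂ)
    (hzeta : ∀ s : ℂ, θ < s.re → s ≠ 1 →
      zeta s = (κ : ℂ) / (s - 1) +
        s * ∫ x in Set.Ioi (1:ℝ), ((N x - κ * (x - 1) : ℝ) : ℂ) * (x : ℂ) ^ (-s - 1))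
    (s : ℂ) (hs1 : s ≠ 1) (hdist : ‖s - 1‖ ≤ κ * (1 - θ) / (A + κ)) :
    zeta s ≠ 0 := by
  intro h0
  have hAκ : (0:ℝ) < A + κ := by linarith
  set u : ℝ := ‖s - 1‖ with hudef
  have hu0 : 0 < u := norm_pos_iff.mpr (sub_ne_zero.mpr hs1)
  have hu1 : u < 1 - θ := by
    refine lt_of_le_of_lt hdist ?_
    rw [div_lt_iff₀ hAκ]
    nlinarith
  have hkey : A * u + κ * u ≤ κ * (1 - θ) := by
    have := (le_div_iff₀ hAκ).mp hdist
    nlinarith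
  set a : ℝ := (s - 1).re with hadef
  have hau : |a| ≤ u := Complex.abs_re_le_norm (s - 1)
  have ha1 : -u ≤ a := by
    have := neg_abs_le a; linarith
  have hau' : a ≤ u := le_trans (le_abs_self a) hau
  have hσa : s.re = 1 + a := by simp [hadef, Complex.sub_re]
  have hθσ : θ < s.re := by rw [hσa]; linarith
  set I : ℂ := ∫ x in Set.Ioi (1:ℝ), ((N x - κ * (x - 1) : ℝ) : ℂ) * (x : ℂ) ^ (-s - 1)
    with hIdef
  have hlt : θ - s.re - 1 < -1 := by linarith
  have hInorm : ‖I‖ * (s.re - θ) ≤ A := by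
    have hint : IntegrableOn (fun x : ℝ => A * x ^ (θ - s.re - 1)) (Set.Ioi 1) :=
      (integrableOn_Ioi_rpow_of_lt hlt one_pos).const_mul A
    have hbound : ∀ᵐ x ∂(volume.restrict (Set.Ioi (1:ℝ))),
        ‖((N x - κ * (x - 1) : ℝ) : ℂ) * (x : ℂ) ^ (-s - 1)‖ ≤ A * x ^ (θ - s.re - 1) := by
      filter_upwards [ae_restrict_mem measurableSet_Ioi] with x hx
      have hx1 : (1:ℝ) < x := hx
      have hx0 : (0:ℝ) < x := by linarith
      have h2 : ‖(x:ℂ) ^ (-s - 1)‖ = x ^ (-s.re - 1) := by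
        rw [Complex.norm_cpow_eq_rpow_re_of_pos hx0]
        congr 1
      have h4 : x ^ θ * x ^ (-s.re - 1) = x ^ (θ - s.re - 1) := by
        rw [← Real.rpow_add hx0]
        ring_nf
      have hxp : (0:ℝ) ≤ x ^ (-s.re - 1) := Real.rpow_nonneg hx0.le _
      rw [norm_mul, Complex.norm_real, Real.norm_eq_abs, h2]
      calc |N x - κ * (x - 1)| * x ^ (-s.re - 1)
          ≤ (A * x ^ θ) * x ^ (-s.re - 1) := by
            exact mul_le_mul_of_nonneg_right (hAx x hx1.le) hxp
        _ = A * x ^ (θ - s.re - 1) := by rw [mul_assoc, h4]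
    have h5 : ‖I‖ ≤ ∫ x in Set.Ioi (1:ℝ), A * x ^ (θ - s.re - 1) :=
      norm_integral_le_of_norm_le hint hbound
    have h6 : ∫ x in Set.Ioi (1:ℝ), A * x ^ (θ - s.re - 1) = A / (s.re - θ) := by
      rw [MeasureTheory.integral_const_mul, integral_Ioi_rpow_of_lt hlt one_pos,
        Real.one_rpow]
      field_simp
      rw [show θ - s.re = -(s.re - θ) by ring, sub_add_cancel, div_neg, neg_neg]
    rw [h6] at h5
    have hpos : 0 < s.re - θ := by linarith
    calc ‖I‖ * (s.re - θ) ≤ (A / (s.re - θ)) * (s.re - θ) :=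
          mul_le_mul_of_nonneg_right h5 hpos.le
      _ = A := by field_simp
  -- from zeta s = 0, κ = -(s * I) * (s - 1)
  have hs1' : s - 1 ≠ 0 := sub_ne_zero.mpr hs1
  have heq : (κ : ℂ) = -(s * I) * (s - 1) := by
    have h := (hzeta s hθσ hs1).symm.trans h0
    rw [div_add' _ _ _ hs1'] at h
    have h' : (κ : ℂ) + s * I * (s - 1) = 0 := by
      have := (div_eq_zero_iff.mp h).resolve_right hs1'
      linear_combination this
    linear_combination h'
  have hκnorm : κ = ‖s‖ * ‖I‖ * u := by
    have := congrArg norm heq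
    rw [Complex.norm_real, Real.norm_eq_abs, abs_of_pos hκ] at this
    rw [this, norm_mul, norm_neg, norm_mul]
  set n : ℝ := ‖s‖ with hndef
  have hn0 : 0 ≤ n := norm_nonneg s
  have hn2 : n ^ 2 = 1 + 2 * a + u ^ 2 := by
    have h1 : n ^ 2 = s.re ^ 2 + s.im ^ 2 := by
      rw [hndef, Complex.sq_norm, Complex.normSq_apply]
      ring
    have h2 : u ^ 2 = a ^ 2 + s.im ^ 2 := by
      rw [hudef, Complex.sq_norm, Complex.normSq_apply, hadef]
      simp [Complex.sub_re, Complex.sub_im]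
      ring
    rw [hσa] at h1
    nlinarith [h1, h2]
  -- main inequality: κ * (1 + a - θ) ≤ n * u * A
  have hmain : κ * (1 + a - θ) ≤ n * u * A := by
    have : κ * (1 + a - θ) = n * u * (‖I‖ * (s.re - θ)) := by
      rw [hκnorm, hσa]; ring
    rw [this]
    have hnu : 0 ≤ n * u := mul_nonneg hn0 hu0.le
    exact mul_le_mul_of_nonneg_left hInorm hnu
  have h7 : A * u ≤ κ * (1 - θ - u) := by linarith
  clear_value u a n I
  clear hzeta hN_mono hN_rc hN0 hAx h0 hs1 hdist hudef hadef hndef hIdef hs1' heq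
    hκnorm hInorm hlt hσa hθσ hau I s zeta N
  rcases eq_or_lt_of_le ha1 with hcase | hcase
  · -- a = -u : then n = 1 - u
    have hne : n = 1 - u := by
      have hsq : n ^ 2 = (1 - u) ^ 2 := by rw [hn2, ← hcase]; ring
      have h1u : (0:ℝ) ≤ 1 - u := by linarith
      calc n = Real.sqrt (n ^ 2) := (Real.sqrt_sq hn0).symm
        _ = Real.sqrt ((1 - u) ^ 2) := by rw [hsq]
        _ = 1 - u := Real.sqrt_sq h1u
    rw [hne, ← hcase] at hmain
    have h8 : (1 - u) * (A * u) ≤ (1 - u) * (κ * (1 - θ - u)) :=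
      mul_le_mul_of_nonneg_left h7 (by linarith)
    have h10 : 0 < u * (κ * (1 - θ - u)) :=
      mul_pos hu0 (mul_pos hκ (by linarith))
    nlinarith [hmain, h8, h10]
  · -- a > -u : n ≤ 1 + a + u, and strict inequality (a+u)(θ+u) > 0
    have hpos1 : (0:ℝ) < 1 + a := by linarith
    have hn_le : n ≤ 1 + a + u := by
      have hle2 : n ^ 2 ≤ (1 + a + u) ^ 2 := by
        nlinarith [hn2, sq_nonneg a, mul_pos hu0 hpos1]
      calc n = Real.sqrt (n ^ 2) := (Real.sqrt_sq hn0).symm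
        _ ≤ Real.sqrt ((1 + a + u) ^ 2) := Real.sqrt_le_sqrt hle2
        _ = 1 + a + u := Real.sqrt_sq (by linarith)
    have h8 : n * (u * A) ≤ (1 + a + u) * (u * A) :=
      mul_le_mul_of_nonneg_right hn_le (by positivity)
    have h9 : (1 + a + u) * (u * A) ≤ (1 + a + u) * (κ * (1 - θ - u)) :=
      mul_le_mul_of_nonneg_left (by linarith) (by linarith)
    have h10 : 0 < κ * ((a + u) * (θ + u)) :=
      mul_pos hκ (mul_pos (by linarith) (by linarith))
    nlinarith [hmain, h8, h9, h10]
end
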